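/- arXiv:2409.05456 — 3 statements merged into one kernel-verified Lean document; each statement's English description precedes it below -/
import Mathlib

section
/- Reach-set characterization of assumption consistency: for a timed Büchi automaton 𝒜, an 𝒜-observation o with words of duration at most t, the set Cons_𝒜(o) ·_t TΣ^ω ∩ L(𝒜) is nonempty if and only if the reach-set Reach_𝒜(Cons_𝒜(o), t) intersects the set NonEmpty(𝒜) of states of 𝒜 with nonempty language. -/
open Classical

/-- A finite timed word: a finite sequence of letters with non-decreasing,
non-negative timestamps. -/
structure FTW (Sigma : Type) where
  toList : List (Sigma × ℝ)
  nonneg : ∀ p ∈ toList, 0 ≤ p.2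
  mono : (toList.map Prod.snd).Chain' (· ≤ ·)

/-- τ(ρ): the last timestamp of a finite timed word (0 for the empty word). -/
def FTW.dur {Sigma : Type} (ρ : FTW Sigma) : ℝ := (ρ.toList.map Prod.snd).getLastD 0

/-- An infinite timed word: letters with non-decreasing, non-negative,
divergent timestamps.  The set of all such words is TΣ^ω, here `Set.univ`. -/
structure ITW (Sigma : Type) where
  σ : ℕ → Sigma
  τ : ℕ → ℝ
  nonneg : ∀ i, 0 ≤ τ i
  mono : Monotone τ
  div : Filter.Tendsto τ Filter.atTop Filter.atTop

/-- ρ is the concatenation ρ₁ ·_t ρ₂ of a finite and an infinite timed word: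
the timestamps of ρ₂ are shifted by t. -/
def IsConcat {Sigma : Type} (ρ₁ : FTW Sigma) (t : ℝ) (ρ₂ : ITW Sigma) (ρ : ITW Sigma) : Prop :=
  ρ₁.dur ≤ t ∧
  (∀ i : Fin ρ₁.toList.length, ρ.σ i = (ρ₁.toList.get i).1 ∧ ρ.τ i = (ρ₁.toList.get i).2) ∧
  (∀ i, ρ₁.toList.length ≤ i →
    ρ.σ i = ρ₂.σ (i - ρ₁.toList.length) ∧ ρ.τ i = ρ₂.τ (i - ρ₁.toList.length) + t)

/-- L₁ ·_t L₂, elementwise concatenation at time t. -/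
def concatSet {Sigma : Type} (L₁ : Set (FTW Sigma)) (t : ℝ) (L₂ : Set (ITW Sigma)) :
    Set (ITW Sigma) :=
  {ρ | ∃ ρ₁ ∈ L₁, ∃ ρ₂ ∈ L₂, IsConcat ρ₁ t ρ₂ ρ}

/-- ρ is the concatenation ρ₁ ·_t ρ₂ of two finite timed words. -/
def IsConcatF {Sigma : Type} (ρ₁ : FTW Sigma) (t : ℝ) (ρ₂ ρ : FTW Sigma) : Prop :=
  ρ₁.dur ≤ t ∧ ρ.toList = ρ₁.toList ++ ρ₂.toList.map (fun p => (p.1, p.2 + t))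

/-- O ⊑_t O': the observation O' extends the observation O at time t. -/
def Extends {Sigma : Type} (O : Set (FTW Sigma)) (t : ℝ) (O' : Set (FTW Sigma)) : Prop :=
  (∀ o ∈ O, ∃ ostar ρ', ρ' ∈ O' ∧ IsConcatF o t ostar ρ') ∧
  (∀ o' ∈ O', ∃ o ∈ O, ∃ ostar, IsConcatF o t ostar o')

/-- A timed Büchi automaton with locations Q, alphabet Sigma, clocks C.
Guards are modelled as predicates on clock valuations. -/
structure TBA (Sigma Q C : Type) where
  init : Set Q
  trans : Set (Q × Q × Sigma × Set C × ((C → ℝ) → Prop))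
  acc : Set Q

/-- One transition step of the TBA: from state s, reading letter a after d time
units have elapsed since the previous event, reaching state s'. -/
def Step {Sigma Q C : Type} (M : TBA Sigma Q C) (s : Q × (C → ℝ)) (a : Sigma) (d : ℝ)
    (s' : Q × (C → ℝ)) : Prop :=
  ∃ lam g, (s.1, s'.1, a, lam, g) ∈ M.trans ∧ g (fun c => s.2 c + d) ∧
    s'.2 = fun c => if c ∈ lam then 0 else s.2 c + d

/-- The timestamp of the previous event (0 before the first event, τ₀ = 0). -/
def prevT {Sigma : Type} (ρ : ITW Sigma) (i : ℕ) : ℝ := if i = 0 then 0 else ρ.τ (i - 1)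

/-- r is an accepting run of M from state s over the infinite timed word ρ:
it starts in s, every step is a valid transition, and accepting locations are
visited infinitely often. -/
def AccRunFrom {Sigma Q C : Type} (M : TBA Sigma Q C) (s : Q × (C → ℝ)) (ρ : ITW Sigma)
    (r : ℕ → Q × (C → ℝ)) : Prop :=
  r 0 = s ∧ (∀ i, Step M (r i) (ρ.σ i) (ρ.τ i - prevT ρ i) (r (i + 1))) ∧
  (∀ N, ∃ i, N < i ∧ (r i).1 ∈ M.acc)

/-- L(M, s): the language of M from state s. -/
def LangFrom {Sigma Q C : Type} (M : TBA Sigma Q C) (s : Q × (C → ℝ)) : Set (ITW Sigma) :=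
  {ρ | ∃ r, AccRunFrom M s ρ r}

/-- L(M): the language of M from its initial states with all clocks zero. -/
def Lang {Sigma Q C : Type} (M : TBA Sigma Q C) : Set (ITW Sigma) :=
  {ρ | ∃ q ∈ M.init, ρ ∈ LangFrom M (q, fun _ => 0)}

/-- NonEmpty(M): the states of M with nonempty language. -/
def NonEmptyStates {Sigma Q C : Type} (M : TBA Sigma Q C) : Set (Q × (C → ℝ)) :=
  {s | (LangFrom M s).Nonempty}

/-- The timestamp of the previous event of a finite timed word (list form). -/
def listPrevT {Sigma : Type} (l : List (Sigma × ℝ)) (i : ℕ) : ℝ :=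
  if i = 0 then 0 else (l.map Prod.snd).getD (i - 1) 0

/-- r is a run prefix of M from an initial state processing the finite timed word l:
r i is the state after the first i events. -/
def FinRunFrom {Sigma Q C : Type} (M : TBA Sigma Q C) (r : ℕ → Q × (C → ℝ))
    (l : List (Sigma × ℝ)) : Prop :=
  (∃ q0 ∈ M.init, r 0 = (q0, fun _ => 0)) ∧
  ∀ i : Fin l.length, Step M (r i.1) (l.get i).1 ((l.get i).2 - listPrevT l i.1) (r (i.1 + 1))

/-- Reach_M(L, t): the states reachable by processing some word of L, with clocks
advanced to the current time t (empty contribution when duration exceeds t). -/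
def Reach {Sigma Q C : Type} (M : TBA Sigma Q C) (L : Set (FTW Sigma)) (t : ℝ) :
    Set (Q × (C → ℝ)) :=
  {s | ∃ ρ ∈ L, ρ.dur ≤ t ∧ ∃ r, FinRunFrom M r ρ.toList ∧
    s = ((r ρ.toList.length).1, fun c => (r ρ.toList.length).2 c + (t - ρ.dur))}

/-!
A word of `O ·_t TΣ^ω` accepted by `M` is a word `ρ₁ ∈ O` followed, after the delay
`t - τ(ρ₁)`, by an infinite word `ρ₂`. Because letting time pass shifts all clocks uniformly,
an accepting run on the concatenation splits into a run prefix on `ρ₁` and an accepting run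
on `ρ₂` from the reached state with its clocks advanced by `t - τ(ρ₁)`, i.e. from a state of
`Reach M O t`; conversely such a pair of runs glues into an accepting run on the
concatenation. The Büchi condition only concerns the tail, so it survives both operations.
-/

namespace FTW

variable {Sigma : Type}

lemma listPrevT_of_pos {l : List (Sigma × ℝ)} {i : ℕ} (h0 : 0 < i) (hi : i ≤ l.length) :
    listPrevT l i = l[i - 1].2 := by
  simp [listPrevT, h0.ne', List.getD_eq_getElem?_getD,
    List.getElem?_eq_getElem (by omega : i - 1 < l.length)]

variable (ρ : FTW Sigma)

lemma dur_of_length_eq_zero (h : ρ.toList.length = 0) : ρ.dur = 0 := by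
  simp [FTW.dur, List.length_eq_zero_iff.mp h]

lemma dur_eq_getElem (h : 0 < ρ.toList.length) :
    ρ.dur = ρ.toList[ρ.toList.length - 1].2 := by
  simp [FTW.dur, List.getLastD_eq_getLast?, List.getLast?_eq_getElem?,
    List.getElem?_eq_getElem (Nat.sub_lt h one_pos)]

lemma dur_nonneg : 0 ≤ ρ.dur := by
  rcases Nat.eq_zero_or_pos ρ.toList.length with h | h
  · rw [ρ.dur_of_length_eq_zero h]
  · rw [ρ.dur_eq_getElem h]
    exact ρ.nonneg _ (List.getElem_mem _)

lemma listPrevT_length : listPrevT ρ.toList ρ.toList.length = ρ.dur := by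
  rcases Nat.eq_zero_or_pos ρ.toList.length with h | h
  · rw [ρ.dur_of_length_eq_zero h, h]
    rfl
  · rw [listPrevT_of_pos h le_rfl, ρ.dur_eq_getElem h]

lemma getElem_snd_le_succ {i : ℕ} (h : i + 1 < ρ.toList.length) :
    ρ.toList[i].2 ≤ ρ.toList[i + 1].2 := by
  have hchain := List.isChain_iff_getElem.mp ρ.mono i (by simpa using h)
  simp only [List.getElem_map] at hchain
  exact hchain

end FTW

def FTW.concatITW {Sigma : Type} (ρ₁ : FTW Sigma) {t : ℝ} (ρ₂ : ITW Sigma) (hd : ρ₁.dur ≤ t) :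
    ITW Sigma where
  σ i := if h : i < ρ₁.toList.length then ρ₁.toList[i].1 else ρ₂.σ (i - ρ₁.toList.length)
  τ i := if h : i < ρ₁.toList.length then ρ₁.toList[i].2 else ρ₂.τ (i - ρ₁.toList.length) + t
  nonneg i := by
    split_ifs
    · exact ρ₁.nonneg _ (List.getElem_mem _)
    · exact add_nonneg (ρ₂.nonneg _) (ρ₁.dur_nonneg.trans hd)
  mono := by
    refine monotone_nat_of_le_succ fun i => ?_
    by_cases h1 : i + 1 < ρ₁.toList.length
    · simp only [dif_pos h1, dif_pos (Nat.lt_of_succ_lt h1)]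
      exact ρ₁.getElem_snd_le_succ h1
    by_cases h2 : i < ρ₁.toList.length
    · simp only [dif_pos h2, dif_neg h1]
      obtain rfl : i = ρ₁.toList.length - 1 := by omega
      calc ρ₁.toList[ρ₁.toList.length - 1].2 = ρ₁.dur := (ρ₁.dur_eq_getElem (by omega)).symm
        _ ≤ t := hd
        _ ≤ _ := le_add_of_nonneg_left (ρ₂.nonneg _)
    · simp only [dif_neg h1, dif_neg h2]
      exact add_le_add_left (ρ₂.mono (by omega)) t
  div := by
    refine (Filter.tendsto_atTop_add_const_right _ t
      (ρ₂.div.comp (Filter.tendsto_sub_atTop_nat ρ₁.toList.length))).congr' ?_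
    filter_upwards [Filter.eventually_ge_atTop ρ₁.toList.length] with i hi
    simp [dif_neg (not_lt.2 hi)]

lemma FTW.isConcat_concatITW {Sigma : Type} (ρ₁ : FTW Sigma) {t : ℝ} (ρ₂ : ITW Sigma)
    (hd : ρ₁.dur ≤ t) : IsConcat ρ₁ t ρ₂ (ρ₁.concatITW ρ₂ hd) :=
  ⟨hd, fun i => by simp [FTW.concatITW], fun i hi => by simp [FTW.concatITW, not_lt.2 hi]⟩

namespace IsConcat

variable {Sigma : Type} {ρ₁ : FTW Sigma} {t : ℝ} {ρ₂ ρ : ITW Sigma}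

lemma σ_add (h : IsConcat ρ₁ t ρ₂ ρ) (j : ℕ) : ρ.σ (ρ₁.toList.length + j) = ρ₂.σ j := by
  simpa using (h.2.2 _ (Nat.le_add_right _ j)).1

lemma τ_add (h : IsConcat ρ₁ t ρ₂ ρ) (j : ℕ) : ρ.τ (ρ₁.toList.length + j) = ρ₂.τ j + t := by
  simpa using (h.2.2 _ (Nat.le_add_right _ j)).2

lemma prevT_eq_listPrevT (h : IsConcat ρ₁ t ρ₂ ρ) {i : ℕ} (hi : i ≤ ρ₁.toList.length) :
    prevT ρ i = listPrevT ρ₁.toList i := by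
  rcases Nat.eq_zero_or_pos i with rfl | h0
  · simp [prevT, listPrevT]
  · rw [prevT, if_neg h0.ne', FTW.listPrevT_of_pos h0 hi, (h.2.1 ⟨i - 1, by omega⟩).2]
    rfl

lemma delay_of_lt (h : IsConcat ρ₁ t ρ₂ ρ) (i : Fin ρ₁.toList.length) :
    ρ.τ i - prevT ρ i = (ρ₁.toList.get i).2 - listPrevT ρ₁.toList i := by
  rw [(h.2.1 i).2, h.prevT_eq_listPrevT i.2.le]

lemma delay_length (h : IsConcat ρ₁ t ρ₂ ρ) :
    ρ.τ ρ₁.toList.length - prevT ρ ρ₁.toList.length = (ρ₂.τ 0 - prevT ρ₂ 0) + (t - ρ₁.dur) := by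
  rw [h.prevT_eq_listPrevT le_rfl, ρ₁.listPrevT_length, ← add_zero ρ₁.toList.length, h.τ_add]
  simp only [prevT, if_pos]
  ring

lemma delay_add_succ (h : IsConcat ρ₁ t ρ₂ ρ) (j : ℕ) :
    ρ.τ (ρ₁.toList.length + (j + 1)) - prevT ρ (ρ₁.toList.length + (j + 1)) =
      ρ₂.τ (j + 1) - prevT ρ₂ (j + 1) := by
  simp only [prevT, Nat.add_eq_zero_iff, one_ne_zero, and_false, if_false, Nat.add_sub_cancel,
    ← Nat.add_assoc]
  rw [Nat.add_assoc, h.τ_add, h.τ_add]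
  ring

end IsConcat

lemma frequently_iff_of_shift {α : Type} {P : α → Prop} {r r' : ℕ → α} {n : ℕ}
    (h : ∀ j, 0 < j → r' j = r (n + j)) :
    (∀ N, ∃ i, N < i ∧ P (r' i)) ↔ (∀ N, ∃ i, N < i ∧ P (r i)) := by
  constructor
  · intro h' N
    obtain ⟨j, hj, hPj⟩ := h' N
    exact ⟨n + j, by omega, h j (by omega) ▸ hPj⟩
  · intro h' N
    obtain ⟨i, hi, hPi⟩ := h' (N + n)
    refine ⟨i - n, by omega, ?_⟩
    rwa [h _ (by omega), Nat.add_sub_cancel' (by omega)]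

section Runs

variable {Sigma Q C : Type} {M : TBA Sigma Q C}

def delayState (s : Q × (C → ℝ)) (e : ℝ) : Q × (C → ℝ) := (s.1, fun c => s.2 c + e)

lemma step_add_iff {s s' : Q × (C → ℝ)} {a : Sigma} {d e : ℝ} :
    Step M s a (d + e) s' ↔ Step M (delayState s e) a d s' := by
  simp only [Step, delayState, add_assoc, add_comm e d]

def suffixRun (r : ℕ → Q × (C → ℝ)) (n : ℕ) (e : ℝ) : ℕ → Q × (C → ℝ) :=
  fun j => if j = 0 then delayState (r n) e else r (n + j)

def glueRun {α : Type} (r r' : ℕ → α) (n : ℕ) : ℕ → α :=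
  fun i => if i ≤ n then r i else r' (i - n)

variable {ρ₁ : FTW Sigma} {t : ℝ} {ρ₂ ρ : ITW Sigma}

lemma IsConcat.finRunFrom (h : IsConcat ρ₁ t ρ₂ ρ) {q : Q} (hq : q ∈ M.init)
    {r : ℕ → Q × (C → ℝ)} (hr : AccRunFrom M (q, fun _ => 0) ρ r) : FinRunFrom M r ρ₁.toList :=
  ⟨⟨q, hq, hr.1⟩, fun i => by simpa only [(h.2.1 i).1, h.delay_of_lt i] using hr.2.1 i⟩

lemma IsConcat.accRunFrom_suffixRun (h : IsConcat ρ₁ t ρ₂ ρ) {s : Q × (C → ℝ)}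
    {r : ℕ → Q × (C → ℝ)} (hr : AccRunFrom M s ρ r) :
    AccRunFrom M (delayState (r ρ₁.toList.length) (t - ρ₁.dur)) ρ₂
      (suffixRun r ρ₁.toList.length (t - ρ₁.dur)) := by
  refine ⟨if_pos rfl, fun j => ?_,
    (frequently_iff_of_shift (P := fun s : Q × (C → ℝ) => s.1 ∈ M.acc)
      fun j hj => if_neg hj.ne').2 hr.2.2⟩
  cases j with
  | zero =>
    have hstep := hr.2.1 ρ₁.toList.length
    rw [h.delay_length, step_add_iff, ← add_zero ρ₁.toList.length, h.σ_add] at hstep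
    simpa [suffixRun] using hstep
  | succ j =>
    have hstep := hr.2.1 (ρ₁.toList.length + (j + 1))
    rw [h.σ_add, h.delay_add_succ] at hstep
    simpa [suffixRun, Nat.add_assoc] using hstep

lemma IsConcat.mem_lang (h : IsConcat ρ₁ t ρ₂ ρ) {r r' : ℕ → Q × (C → ℝ)}
    (hr : FinRunFrom M r ρ₁.toList)
    (hr' : AccRunFrom M (delayState (r ρ₁.toList.length) (t - ρ₁.dur)) ρ₂ r') : ρ ∈ Lang M := by
  obtain ⟨⟨q, hq, hr0⟩, hsteps⟩ := hr
  set n := ρ₁.toList.length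
  have htail : ∀ j, 0 < j → r' j = glueRun r r' n (n + j) := fun j hj => by
    simp [glueRun, hj.ne']
  refine ⟨q, hq, glueRun r r' n, by simp [glueRun, hr0], fun i => ?_,
    (frequently_iff_of_shift (P := fun s : Q × (C → ℝ) => s.1 ∈ M.acc) htail).1 hr'.2.2⟩
  rcases lt_trichotomy i n with hi | rfl | hi
  · simpa [glueRun, hi.le, Nat.succ_le_of_lt hi, (h.2.1 ⟨i, hi⟩).1, h.delay_of_lt ⟨i, hi⟩]
      using hsteps ⟨i, hi⟩
  · have hstep := hr'.2.1 0
    rw [hr'.1, ← step_add_iff, ← h.delay_length, ← h.σ_add, add_zero] at hstep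
    simpa [glueRun] using hstep
  · obtain ⟨j, rfl⟩ : ∃ j, i = n + (j + 1) := ⟨i - n - 1, by omega⟩
    rw [h.σ_add, h.delay_add_succ, ← htail _ j.succ_pos, Nat.add_assoc, ← htail _ (by omega)]
    exact hr'.2.1 (j + 1)

lemma IsConcat.reach_inter_nonEmptyStates_nonempty (h : IsConcat ρ₁ t ρ₂ ρ)
    {O : Set (FTW Sigma)} (hO : ρ₁ ∈ O) (hρ : ρ ∈ Lang M) :
    (Reach M O t ∩ NonEmptyStates M).Nonempty := by
  obtain ⟨q, hq, r, hr⟩ := hρ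
  exact ⟨_, ⟨ρ₁, hO, h.1, r, h.finRunFrom hq hr, rfl⟩, ρ₂, _, h.accRunFrom_suffixRun hr⟩

end Runs

theorem stmt12_general {Sigma Q C : Type} (M : TBA Sigma Q C)
    (O : Set (FTW Sigma)) (t : ℝ) :
    (concatSet O t Set.univ ∩ Lang M).Nonempty ↔
    (Reach M O t ∩ NonEmptyStates M).Nonempty := by
  constructor
  · rintro ⟨ρ, ⟨ρ₁, hO, ρ₂, -, hcat⟩, hρ⟩
    exact hcat.reach_inter_nonEmptyStates_nonempty hO hρ
  · rintro ⟨_, ⟨ρ₁, hO, hd, r, hr, rfl⟩, ρ₂, r', hr'⟩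
    have hcat := ρ₁.isConcat_concatITW ρ₂ hd
    exact ⟨_, ⟨ρ₁, hO, ρ₂, trivial, hcat⟩, hcat.mem_lang hr hr'⟩

/-- reach-set characterization of assumption consistency:
Cons_𝒜(o) ·_t TΣ^ω ∩ L(𝒜) ≠ ∅ iff Reach_𝒜(Cons_𝒜(o), t) ∩ NonEmpty(𝒜) ≠ ∅,
where O is the set of words consistent with the observation, all of duration ≤ t. -/
theorem stmt12 {Sigma Q C : Type} [Fintype Sigma] (M : TBA Sigma Q C)
    (O : Set (FTW Sigma)) (t : ℝ) (hdur : ∀ ρ ∈ O, FTW.dur ρ ≤ t) :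
    (concatSet O t Set.univ ∩ Lang M).Nonempty ↔
    (Reach M O t ∩ NonEmptyStates M).Nonempty :=
  stmt12_general M O t
end

section
/- Reach-set characterization of guaranteed satisfaction: with the hypotheses that t bounds the duration of all words in Cons_𝒜(o), the inclusion Cons_𝒜(o) ·_t TΣ^ω ∩ L(𝒜) ⊆ L(φ) holds if and only if Reach_{ℬ_{¬φ} ⊗ 𝒜}(Cons_𝒜(o), t) ∩ NonEmpty(ℬ_{¬φ} ⊗ 𝒜) = ∅, where ℬ_{¬φ} is a TBA with L(ℬ_{¬φ}) = TΣ^ω \ L(φ). -/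
open Classical

/-!
An accepting run on a concatenation `o ·_t ρ₂` is the same thing as a run on `o` followed,
after letting the remaining `t - τ(o)` time units elapse, by an accepting run on `ρ₂` from the
reached state. Hence some word of `O ·_t TΣ^ω` is accepted by `P` iff some state of
`Reach_P(O, t)` has nonempty language, and since `L(P) = L(𝒜) \ L(φ)` such a word is exactly a
counterexample to the inclusion.
-/

section

variable {Sigma : Type}

namespace FTW

lemma le_dur (o : FTW Sigma) {x : ℝ} (hx : x ∈ o.toList.map Prod.snd) : x ≤ o.dur := by
  rw [dur, List.getLastD_eq_getLast?, List.getLast?_eq_some_getLast (List.ne_nil_of_mem hx),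
    Option.getD_some]
  exact (List.isChain_iff_pairwise.mp o.mono).rel_getLast hx

lemma dur_nonneg_s14 (o : FTW Sigma) : 0 ≤ o.dur := by
  rw [dur, List.getLastD_eq_getLast?]
  cases h : (o.toList.map Prod.snd).getLast? with
  | none => exact le_rfl
  | some x =>
    obtain ⟨p, hp, rfl⟩ := List.mem_map.mp (List.mem_of_getLast? h)
    exact o.nonneg p hp

lemma listPrevT_length_s14 (o : FTW Sigma) : listPrevT o.toList o.toList.length = o.dur := by
  unfold listPrevT dur
  split_ifs with h
  · simp [List.length_eq_zero_iff.mp h]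
  · simp [List.getLastD_eq_getLast?, List.getLast?_eq_getElem?]

def appendAt (o : FTW Sigma) (t : ℝ) (ρ₂ : ITW Sigma) (ht : o.dur ≤ t) : ITW Sigma where
  σ i := if h : i < o.toList.length then (o.toList.get ⟨i, h⟩).1 else ρ₂.σ (i - o.toList.length)
  τ i := if h : i < o.toList.length then (o.toList.get ⟨i, h⟩).2
    else ρ₂.τ (i - o.toList.length) + t
  nonneg i := by
    split_ifs
    · exact o.nonneg _ (List.get_mem _ _)
    · exact add_nonneg (ρ₂.nonneg _) (o.dur_nonneg_s14.trans ht)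
  mono := monotone_nat_of_le_succ fun i => by
    split_ifs with h1 h2 h2
    · have := List.isChain_iff_getElem.mp o.mono i (by simpa using h2)
      simpa using this
    · calc (o.toList.get ⟨i, h1⟩).2
          ≤ o.dur := o.le_dur (List.mem_map_of_mem (List.get_mem _ _))
        _ ≤ ρ₂.τ (i + 1 - o.toList.length) + t := by
          linarith [ρ₂.nonneg (i + 1 - o.toList.length)]
    · omega
    · exact add_le_add_left
        (ρ₂.mono (by omega : i - o.toList.length ≤ i + 1 - o.toList.length)) t
  div := by
    refine (Filter.tendsto_atTop_add_const_right _ t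
      (ρ₂.div.comp (Filter.tendsto_sub_atTop_nat o.toList.length))).congr' ?_
    filter_upwards [Filter.eventually_ge_atTop o.toList.length] with i hi
    simp [not_lt.mpr hi]

lemma isConcat_appendAt (o : FTW Sigma) (t : ℝ) (ρ₂ : ITW Sigma) (ht : o.dur ≤ t) :
    IsConcat o t ρ₂ (o.appendAt t ρ₂ ht) :=
  ⟨ht, fun i => by simp [appendAt], fun i hi => by simp [appendAt, not_lt.mpr hi]⟩

end FTW

def advanceClocks {Q C : Type} (s : Q × (C → ℝ)) (d : ℝ) : Q × (C → ℝ) :=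
  (s.1, fun c => s.2 c + d)

lemma step_advanceClocks_iff {Q C : Type} (M : TBA Sigma Q C) (s s' : Q × (C → ℝ)) (a : Sigma)
    (κ d : ℝ) : Step M (advanceClocks s κ) a d s' ↔ Step M s a (d + κ) s' := by
  simp only [Step, advanceClocks, add_assoc, add_comm κ d]

def ITW.delay (ρ : ITW Sigma) (i : ℕ) : ℝ := ρ.τ i - prevT ρ i

namespace IsConcat

variable {o : FTW Sigma} {t : ℝ} {ρ₂ ρ : ITW Sigma}

lemma prevT_eq (h : IsConcat o t ρ₂ ρ) {i : ℕ} (hi : i ≤ o.toList.length) :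
    prevT ρ i = listPrevT o.toList i := by
  unfold prevT listPrevT
  split_ifs with h0
  · rfl
  · rw [(h.2.1 ⟨i - 1, by omega⟩).2, List.getD_eq_getElem _ _ (by simp; omega)]
    simp

lemma delay_eq (h : IsConcat o t ρ₂ ρ) (i : Fin o.toList.length) :
    ρ.delay i = (o.toList.get i).2 - listPrevT o.toList i := by
  rw [ITW.delay, (h.2.1 i).2, h.prevT_eq i.2.le]

lemma σ_add_length (h : IsConcat o t ρ₂ ρ) (j : ℕ) : ρ.σ (j + o.toList.length) = ρ₂.σ j := by
  simpa using (h.2.2 (j + o.toList.length) (by omega)).1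

lemma delay_length_s14 (h : IsConcat o t ρ₂ ρ) :
    ρ.delay o.toList.length = ρ₂.delay 0 + (t - o.dur) := by
  rw [ITW.delay, ITW.delay, (h.2.2 _ le_rfl).2, h.prevT_eq le_rfl, o.listPrevT_length_s14,
    Nat.sub_self, prevT, if_pos rfl]
  ring

lemma delay_add_length (h : IsConcat o t ρ₂ ρ) {j : ℕ} (hj : j ≠ 0) :
    ρ.delay (j + o.toList.length) = ρ₂.delay j := by
  have h1 := (h.2.2 (j + o.toList.length) (by omega)).2
  have h2 := (h.2.2 (j - 1 + o.toList.length) (by omega)).2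
  simp only [Nat.add_sub_cancel] at h1 h2
  simp only [ITW.delay, prevT, if_neg hj, if_neg (by omega : j + o.toList.length ≠ 0),
    show j + o.toList.length - 1 = j - 1 + o.toList.length by omega, h1, h2]
  ring

variable {Q C : Type} (M : TBA Sigma Q C)

lemma finRunFrom_iff (h : IsConcat o t ρ₂ ρ) (r : ℕ → Q × (C → ℝ)) :
    FinRunFrom M r o.toList ↔ (∃ q0 ∈ M.init, r 0 = (q0, fun _ => 0)) ∧
      ∀ i : Fin o.toList.length, Step M (r i) (ρ.σ i) (ρ.delay i) (r (i + 1)) := by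
  simp only [FinRunFrom, (h.2.1 _).1, h.delay_eq]

lemma accRunFrom_suffix (h : IsConcat o t ρ₂ ρ) {s : Q × (C → ℝ)} {r : ℕ → Q × (C → ℝ)}
    (hr : AccRunFrom M s ρ r) :
    AccRunFrom M (advanceClocks (r o.toList.length) (t - o.dur)) ρ₂
      (fun j => if j = 0 then advanceClocks (r o.toList.length) (t - o.dur)
        else r (j + o.toList.length)) := by
  obtain ⟨-, hstep, hacc⟩ := hr
  have hstep (i : ℕ) : Step M (r i) (ρ.σ i) (ρ.delay i) (r (i + 1)) := hstep i
  refine ⟨rfl, fun j => ?_, fun N => ?_⟩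
  · show Step M _ (ρ₂.σ j) (ρ₂.delay j) _
    rcases eq_or_ne j 0 with rfl | hj
    · simpa [step_advanceClocks_iff, ← h.delay_length_s14, ← h.σ_add_length 0, Nat.add_comm 1]
        using hstep o.toList.length
    · simpa [hj, ← h.delay_add_length hj, ← h.σ_add_length j, Nat.add_right_comm j 1]
        using hstep (j + o.toList.length)
  · obtain ⟨i, hi, hacc⟩ := hacc (N + o.toList.length)
    refine ⟨i - o.toList.length, by omega, ?_⟩
    simpa [show i - o.toList.length ≠ 0 by omega,
      Nat.sub_add_cancel (by omega : o.toList.length ≤ i)] using hacc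

lemma accRunFrom_append (h : IsConcat o t ρ₂ ρ) {r r₂ : ℕ → Q × (C → ℝ)}
    (hr : FinRunFrom M r o.toList)
    (hr₂ : AccRunFrom M (advanceClocks (r o.toList.length) (t - o.dur)) ρ₂ r₂) :
    AccRunFrom M (r 0) ρ
      (fun i => if i ≤ o.toList.length then r i else r₂ (i - o.toList.length)) := by
  obtain ⟨hr₂0, hstep₂, hacc₂⟩ := hr₂
  have hstep₂ (j : ℕ) : Step M (r₂ j) (ρ₂.σ j) (ρ₂.delay j) (r₂ (j + 1)) := hstep₂ j
  refine ⟨by simp, fun i => ?_, fun N => ?_⟩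
  · show Step M _ (ρ.σ i) (ρ.delay i) _
    rcases lt_or_ge i o.toList.length with hi | hi
    · simpa [hi.le, Nat.succ_le_of_lt hi] using ((h.finRunFrom_iff M r).1 hr).2 ⟨i, hi⟩
    obtain ⟨j, rfl⟩ := Nat.exists_eq_add_of_le' hi
    rcases eq_or_ne j 0 with rfl | hj
    · have := hstep₂ 0
      rw [hr₂0, step_advanceClocks_iff, ← h.delay_length_s14] at this
      simpa [← h.σ_add_length 0] using this
    · simpa [hj, h.delay_add_length hj, h.σ_add_length j,
        Nat.add_right_comm j o.toList.length 1] using hstep₂ j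
  · obtain ⟨j, hj, hacc⟩ := hacc₂ N
    exact ⟨j + o.toList.length, by omega, by simpa [show j ≠ 0 by omega] using hacc⟩

lemma mem_lang_iff (h : IsConcat o t ρ₂ ρ) :
    ρ ∈ Lang M ↔ ∃ r, FinRunFrom M r o.toList ∧
      ρ₂ ∈ LangFrom M (advanceClocks (r o.toList.length) (t - o.dur)) := by
  constructor
  · rintro ⟨q0, hq0, r, hr⟩
    exact ⟨r, (h.finRunFrom_iff M r).2 ⟨⟨q0, hq0, hr.1⟩, fun i => hr.2.1 i⟩, _,
      h.accRunFrom_suffix M hr⟩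
  · rintro ⟨r, hr, r₂, hr₂⟩
    obtain ⟨q0, hq0, hr0⟩ := hr.1
    exact ⟨q0, hq0, _, hr0 ▸ h.accRunFrom_append M hr hr₂⟩

end IsConcat

lemma concatSet_univ_inter_lang_nonempty_iff {Q C : Type} (M : TBA Sigma Q C)
    (O : Set (FTW Sigma)) (t : ℝ) :
    (concatSet O t Set.univ ∩ Lang M).Nonempty ↔ (Reach M O t ∩ NonEmptyStates M).Nonempty := by
  constructor
  · rintro ⟨ρ, ⟨o, ho, ρ₂, -, hc⟩, hρ⟩
    obtain ⟨r, hr, hρ₂⟩ := (hc.mem_lang_iff M).1 hρ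
    exact ⟨_, ⟨o, ho, hc.1, r, hr, rfl⟩, ρ₂, hρ₂⟩
  · rintro ⟨_, ⟨o, ho, hot, r, hr, rfl⟩, ρ₂, hρ₂⟩
    have hc := o.isConcat_appendAt t ρ₂ hot
    exact ⟨_, ⟨o, ho, ρ₂, trivial, hc⟩, (hc.mem_lang_iff M).2 ⟨r, hr, hρ₂⟩⟩

end

theorem stmt14_general {Sigma Q C QB CB QP CP : Type}
    (M : TBA Sigma Q C) (B : TBA Sigma QB CB) (P : TBA Sigma QP CP)
    (φ : Set (ITW Sigma)) (hB : Lang B = (Set.univ : Set (ITW Sigma)) \ φ)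
    (hP : Lang P = Lang B ∩ Lang M)
    (O : Set (FTW Sigma)) (t : ℝ) :
    concatSet O t Set.univ ∩ Lang M ⊆ φ ↔
    Reach P O t ∩ NonEmptyStates P = ∅ := by
  rw [← Set.not_nonempty_iff_eq_empty, ← concatSet_univ_inter_lang_nonempty_iff, hP, hB]
  simp only [Set.subset_def, Set.Nonempty, Set.mem_inter_iff, Set.mem_sdiff, Set.mem_univ,
    true_and]
  grind

/-- reach-set characterization of guaranteed satisfaction: with all
words of O of duration ≤ t, ℬ_{¬φ} a TBA for the complement of φ, and P a product
TBA with L(P) = L(ℬ_{¬φ}) ∩ L(𝒜), we have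
O ·_t TΣ^ω ∩ L(𝒜) ⊆ φ iff Reach_P(O, t) ∩ NonEmpty(P) = ∅. -/
theorem stmt14 {Sigma Q C QB CB QP CP : Type} [Fintype Sigma]
    (M : TBA Sigma Q C) (B : TBA Sigma QB CB) (P : TBA Sigma QP CP)
    (φ : Set (ITW Sigma)) (hB : Lang B = (Set.univ : Set (ITW Sigma)) \ φ)
    (hP : Lang P = Lang B ∩ Lang M)
    (O : Set (FTW Sigma)) (t : ℝ) (hdur : ∀ ρ ∈ O, FTW.dur ρ ≤ t) :
    concatSet O t Set.univ ∩ Lang M ⊆ φ ↔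
    Reach P O t ∩ NonEmptyStates P = ∅ :=
  stmt14_general M B P φ hB hP O t
end

section
/- Multiplicity normalization: replacing an observation element (φ, I, ≥e) with e > 0 by the two elements (φ, I, =e)(φ, I, ≥0) does not change the set of consistent timed words, i.e., Cons_𝒜(o₁ (φ,I,≥e) o₂) = Cons_𝒜(o₁ (φ,I,=e)(φ,I,≥0) o₂) for all observation sequences o₁, o₂. -/
open Classical

/-- Multiplicities of observation elements: ≤e, =e, ≥e. -/
inductive Mult where
  | le : ℕ → Mult
  | eq : ℕ → Mult
  | ge : ℕ → Mult

/-- A count k satisfies a multiplicity. -/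
def Mult.sat : Mult → ℕ → Prop
  | .le e, k => k ≤ e
  | .eq e, k => k = e
  | .ge e, k => e ≤ k

/-- An element (φ, I, m) of an 𝒜-observation: φ is a (semantic) propositional
formula over letters and states of the automaton, I a time interval, m a
multiplicity. -/
structure ObsElem (Sigma Q C : Type) where
  phi : Sigma → Q × (C → ℝ) → Prop
  I : Set ℝ
  m : Mult

/-- ρ is consistent with the observation o: some run prefix of M processing ρ
admits a monotone matching h from positions of ρ to elements of o, respecting
formulas, intervals, and multiplicities. -/
def Consistent {Sigma Q C : Type} (M : TBA Sigma Q C) (o : List (ObsElem Sigma Q C))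
    (ρ : FTW Sigma) : Prop :=
  ∃ r : ℕ → Q × (C → ℝ), FinRunFrom M r ρ.toList ∧
    ∃ h : Fin ρ.toList.length → Fin o.length,
      (∀ j1 j2 : Fin ρ.toList.length, j1 ≤ j2 → h j1 ≤ h j2) ∧
      (∀ j' : Fin ρ.toList.length,
        (o.get (h j')).phi (ρ.toList.get j').1 (r (j'.1 + 1)) ∧
        (ρ.toList.get j').2 ∈ (o.get (h j')).I) ∧
      (∀ j : Fin o.length,
        (o.get j).m.sat ((Finset.univ.filter (fun j' => h j' = j)).card))


lemma countLemma {n : ℕ} (S : Finset (Fin n)) (e : ℕ) (he : e ≤ S.card) :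
    (S.filter fun x => (S.filter (· < x)).card < e).card = e := by
  set c : Fin n → ℕ := fun x => (S.filter (· < x)).card with hc
  have hmono : ∀ x ∈ S, ∀ y ∈ S, x < y → c x < c y := by
    intro x hx y hy hxy
    apply Finset.card_lt_card
    constructor
    · intro z hz
      simp only [Finset.mem_filter] at hz ⊢
      exact ⟨hz.1, hz.2.trans hxy⟩
    · intro hsub
      have hx' : x ∈ S.filter (· < y) := Finset.mem_filter.2 ⟨hx, hxy⟩
      have := hsub hx'
      simp at this
  have hinj : Set.InjOn c S := by
    intro x hx y hy hxy
    rcases lt_trichotomy x y with h | h | h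
    · exact absurd hxy (ne_of_lt (hmono x hx y hy h))
    · exact h
    · exact absurd hxy.symm (ne_of_lt (hmono y hy x hx h))
  have hbound : ∀ x ∈ S, c x < S.card := by
    intro x hx
    calc c x ≤ (S.erase x).card := Finset.card_le_card (by
          intro z hz; simp only [Finset.mem_filter] at hz
          exact Finset.mem_erase.2 ⟨ne_of_lt hz.2, hz.1⟩)
    _ < S.card := Finset.card_erase_lt_of_mem hx
  have himg : S.image c = Finset.range S.card := by
    apply Finset.eq_of_subset_of_card_le
    · intro y hy
      simp only [Finset.mem_image] at hy
      obtain ⟨x, hx, rfl⟩ := hy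
      exact Finset.mem_range.2 (hbound x hx)
    · rw [Finset.card_range, Finset.card_image_of_injOn hinj]
  have key : (S.filter fun x => c x < e).image c = Finset.range e := by
    ext y
    simp only [Finset.mem_image, Finset.mem_filter, Finset.mem_range]
    constructor
    · rintro ⟨x, ⟨hx, hlt⟩, rfl⟩; exact hlt
    · intro hy
      have hy2 : y ∈ Finset.range S.card := Finset.mem_range.2 (lt_of_lt_of_le hy he)
      rw [← himg] at hy2
      obtain ⟨x, hx, rfl⟩ := Finset.mem_image.1 hy2
      exact ⟨x, ⟨hx, hy⟩, rfl⟩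
  have := Finset.card_image_of_injOn
    (hinj.mono (by exact_mod_cast Finset.filter_subset _ S : ((S.filter fun x => c x < e) : Set (Fin n)) ⊆ S))
  rw [key, Finset.card_range] at this
  exact this.symm


lemma getElem3_left {α : Type*} {o₁ mid o₂ : List α} {i : ℕ} (hi : i < o₁.length)
    {hh : i < ((o₁ ++ mid) ++ o₂).length} :
    ((o₁ ++ mid) ++ o₂)[i] = o₁[i] := by
  rw [List.getElem_append_left (by simp; omega), List.getElem_append_left hi]

lemma getElem3_mid {α : Type*} {o₁ mid o₂ : List α} {i k : ℕ} (h1 : i = o₁.length + k)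
    (hk : k < mid.length) {hh : i < ((o₁ ++ mid) ++ o₂).length} :
    ((o₁ ++ mid) ++ o₂)[i] = mid[k] := by
  subst h1
  rw [List.getElem_append_left (by simp; omega), List.getElem_append_right (by omega)]
  congr 1
  omega

lemma getElem3_right {α : Type*} {o₁ mid o₂ : List α} {i k : ℕ}
    (h1 : i = o₁.length + mid.length + k) (hk : k < o₂.length)
    {hh : i < ((o₁ ++ mid) ++ o₂).length} :
    ((o₁ ++ mid) ++ o₂)[i] = o₂[k] := by
  subst h1
  rw [List.getElem_append_right (by simp)]
  congr 1
  simp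

/-- multiplicity normalization: replacing an observation element
(φ, I, ≥e) with e > 0 by (φ, I, =e)(φ, I, ≥0) does not change the set of
consistent timed words. -/
theorem stmt16 {Sigma Q C : Type} [Fintype Sigma] (M : TBA Sigma Q C)
    (o₁ o₂ : List (ObsElem Sigma Q C)) (phi : Sigma → Q × (C → ℝ) → Prop)
    (I : Set ℝ) (e : ℕ) (he : 0 < e) :
    {ρ : FTW Sigma | Consistent M (o₁ ++ [⟨phi, I, Mult.ge e⟩] ++ o₂) ρ} =
    {ρ : FTW Sigma | Consistent M (o₁ ++ [⟨phi, I, Mult.eq e⟩, ⟨phi, I, Mult.ge 0⟩] ++ o₂) ρ} := by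
  classical
  ext ρ
  simp only [Set.mem_setOf_eq]
  set A : ObsElem Sigma Q C := ⟨phi, I, Mult.ge e⟩ with hA
  set B : ObsElem Sigma Q C := ⟨phi, I, Mult.eq e⟩ with hB
  set Cg : ObsElem Sigma Q C := ⟨phi, I, Mult.ge 0⟩ with hCg
  have hLo : (o₁ ++ [A] ++ o₂).length = o₁.length + 1 + o₂.length := by
    simp [List.length_append]; omega
  have hLo' : (o₁ ++ [B, Cg] ++ o₂).length = o₁.length + 2 + o₂.length := by
    simp [List.length_append]; omega
  have hsame : ∀ (i i' : ℕ) (hi : i < (o₁ ++ [A] ++ o₂).length)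
      (hi' : i' < (o₁ ++ [B, Cg] ++ o₂).length),
      ((i' = i ∧ i < o₁.length) ∨ (i = o₁.length ∧ (i' = o₁.length ∨ i' = o₁.length + 1)) ∨
        (i' = i + 1 ∧ o₁.length < i)) →
      ((o₁ ++ [B, Cg] ++ o₂)[i']'hi').phi = ((o₁ ++ [A] ++ o₂)[i]'hi).phi ∧
      ((o₁ ++ [B, Cg] ++ o₂)[i']'hi').I = ((o₁ ++ [A] ++ o₂)[i]'hi).I := by
    intro i i' hi hi' hcase
    rcases hcase with ⟨rfl, hlt⟩ | ⟨rfl, hc⟩ | ⟨rfl, hlt⟩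
    · rw [getElem3_left hlt, getElem3_left hlt]
      exact ⟨rfl, rfl⟩
    · have hA1 : ((o₁ ++ [A]) ++ o₂)[o₁.length]'hi = A :=
        getElem3_mid (k := 0) (by omega) (by simp)
      rcases hc with rfl | rfl
      · rw [hA1, getElem3_mid (k := 0) (by omega) (by simp)]
        exact ⟨rfl, rfl⟩
      · rw [hA1, getElem3_mid (k := 1) (by omega) (by simp)]
        exact ⟨rfl, rfl⟩
    · have hi2 := hi
      rw [hLo] at hi2
      have hk : i - (o₁.length + 1) < o₂.length := by omega
      rw [getElem3_right (k := i - (o₁.length + 1)) (by simp; omega) hk,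
        getElem3_right (k := i - (o₁.length + 1)) (by simp; omega) hk]
      exact ⟨rfl, rfl⟩
  constructor
  · rintro ⟨r, hrun, h, hmon, hphi, hmult⟩
    have hb : ∀ j' : Fin ρ.toList.length, (h j' : ℕ) < o₁.length + 1 + o₂.length := by
      intro j'
      have := (h j').2
      omega
    have hnlt : o₁.length < (o₁ ++ [A] ++ o₂).length := by rw [hLo]; omega
    set S : Finset (Fin ρ.toList.length) :=
      Finset.univ.filter (fun k => ((h k : ℕ) = o₁.length)) with hSdef
    have hcardS : e ≤ S.card := by
      have h1 := hmult ⟨o₁.length, hnlt⟩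
      rw [List.get_eq_getElem, getElem3_mid (k := 0) (by simp) (by simp)] at h1
      have hfeq : (Finset.univ.filter (fun j' => h j' = ⟨o₁.length, hnlt⟩)) = S := by
        ext z
        simp only [hSdef, Finset.mem_filter, Finset.mem_univ, true_and, Fin.ext_iff]
      rw [hfeq] at h1
      exact h1
    set rk : Fin ρ.toList.length → ℕ := fun j' => (S.filter (· < j')).card with hrk
    have hrkmono : ∀ j1 j2 : Fin ρ.toList.length, j1 ≤ j2 → rk j1 ≤ rk j2 := by
      intro j1 j2 hle
      apply Finset.card_le_card
      intro z hz
      simp only [Finset.mem_filter] at hz ⊢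
      exact ⟨hz.1, lt_of_lt_of_le hz.2 hle⟩
    set v : Fin ρ.toList.length → ℕ := fun j' =>
      if (h j' : ℕ) < o₁.length then (h j' : ℕ)
      else if (h j' : ℕ) = o₁.length then (if rk j' < e then o₁.length else o₁.length + 1)
      else (h j' : ℕ) + 1 with hvdef
    have hvlt : ∀ j', v j' < (o₁ ++ [B, Cg] ++ o₂).length := by
      intro j'
      rw [hLo']
      have := hb j'
      simp only [hvdef]
      split_ifs <;> omega
    refine ⟨r, hrun, fun j' => ⟨v j', hvlt j'⟩, ?_, ?_, ?_⟩
    · intro j1 j2 hle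
      simp only [Fin.mk_le_mk]
      have h1 := hmon j1 j2 hle
      rw [Fin.le_def] at h1
      have h2 := hrkmono j1 j2 hle
      simp only [hvdef]
      split_ifs <;> omega
    · intro j'
      have hp := hphi j'
      rw [List.get_eq_getElem, List.get_eq_getElem] at hp
      simp only [List.get_eq_getElem]
      have hdis : ((v j' = (h j' : ℕ) ∧ (h j' : ℕ) < o₁.length) ∨
          ((h j' : ℕ) = o₁.length ∧ (v j' = o₁.length ∨ v j' = o₁.length + 1)) ∨
          (v j' = (h j' : ℕ) + 1 ∧ o₁.length < (h j' : ℕ))) := by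
        simp only [hvdef]
        split_ifs <;> omega
      obtain ⟨hph, hii⟩ := hsame (h j' : ℕ) (v j') (h j').2 (hvlt j') hdis
      constructor
      · rw [hph]
        exact hp.1
      · rw [hii]
        exact hp.2
    · intro j
      have hj2 : (j : ℕ) < o₁.length + 2 + o₂.length := by have := j.2; omega
      simp only [List.get_eq_getElem]
      rcases Nat.lt_trichotomy (j : ℕ) o₁.length with hc | hc | hc
      · have hio : (j : ℕ) < (o₁ ++ [A] ++ o₂).length := by rw [hLo]; omega
        have h1 := hmult ⟨(j : ℕ), hio⟩
        rw [List.get_eq_getElem, getElem3_left hc] at h1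
        rw [getElem3_left hc]
        have hfeq : (Finset.univ.filter (fun j' => (⟨v j', hvlt j'⟩ : Fin (o₁ ++ [B, Cg] ++ o₂).length) = j))
            = Finset.univ.filter (fun j' => h j' = ⟨(j : ℕ), hio⟩) := by
          ext z
          simp only [Finset.mem_filter, Finset.mem_univ, true_and, Fin.ext_iff]
          have := hb z
          simp only [hvdef]
          split_ifs <;> omega
        rw [hfeq]
        exact h1
      · have hgB : (o₁ ++ [B, Cg] ++ o₂)[(j : ℕ)]'(j.2) = B :=
          getElem3_mid (k := 0) (by omega) (by simp)
        rw [hgB]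
        have hfeq : (Finset.univ.filter (fun j' => (⟨v j', hvlt j'⟩ : Fin (o₁ ++ [B, Cg] ++ o₂).length) = j))
            = S.filter (fun x => (S.filter (· < x)).card < e) := by
          ext z
          simp only [hSdef, Finset.mem_filter, Finset.mem_univ, true_and, Fin.ext_iff]
          have := hb z
          simp only [hvdef, hrk, hSdef]
          split_ifs <;> omega
        rw [hfeq]
        exact countLemma S e hcardS
      · by_cases hc2 : (j : ℕ) = o₁.length + 1
        · have hgC : (o₁ ++ [B, Cg] ++ o₂)[(j : ℕ)]'(j.2) = Cg :=
            getElem3_mid (k := 1) (by omega) (by simp)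
          rw [hgC]
          exact Nat.zero_le _
        · have hio : (j : ℕ) - 1 < (o₁ ++ [A] ++ o₂).length := by rw [hLo]; omega
          have h1 := hmult ⟨(j : ℕ) - 1, hio⟩
          rw [List.get_eq_getElem,
            getElem3_right (k := (j : ℕ) - (o₁.length + 2)) (by simp; omega) (by omega)] at h1
          rw [getElem3_right (k := (j : ℕ) - (o₁.length + 2)) (by simp; omega) (by omega)]
          have hfeq : (Finset.univ.filter (fun j' => (⟨v j', hvlt j'⟩ : Fin (o₁ ++ [B, Cg] ++ o₂).length) = j))
              = Finset.univ.filter (fun j' => h j' = ⟨(j : ℕ) - 1, hio⟩) := by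
            ext z
            simp only [Finset.mem_filter, Finset.mem_univ, true_and, Fin.ext_iff]
            have := hb z
            simp only [hvdef]
            split_ifs <;> omega
          rw [hfeq]
          exact h1
  · rintro ⟨r, hrun, h, hmon, hphi, hmult⟩
    have hb : ∀ j' : Fin ρ.toList.length, (h j' : ℕ) < o₁.length + 2 + o₂.length := by
      intro j'
      have := (h j').2
      omega
    set w : Fin ρ.toList.length → ℕ := fun j' =>
      if (h j' : ℕ) ≤ o₁.length + 1 then min (h j' : ℕ) o₁.length else (h j' : ℕ) - 1 with hwdef
    have hwlt : ∀ j', w j' < (o₁ ++ [A] ++ o₂).length := by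
      intro j'
      rw [hLo]
      have := hb j'
      simp only [hwdef]
      split_ifs <;> omega
    refine ⟨r, hrun, fun j' => ⟨w j', hwlt j'⟩, ?_, ?_, ?_⟩
    · intro j1 j2 hle
      simp only [Fin.mk_le_mk]
      have h1 := hmon j1 j2 hle
      rw [Fin.le_def] at h1
      simp only [hwdef]
      split_ifs <;> omega
    · intro j'
      have hp := hphi j'
      rw [List.get_eq_getElem, List.get_eq_getElem] at hp
      simp only [List.get_eq_getElem]
      have hdis : (((h j' : ℕ) = w j' ∧ w j' < o₁.length) ∨
          (w j' = o₁.length ∧ ((h j' : ℕ) = o₁.length ∨ (h j' : ℕ) = o₁.length + 1)) ∨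
          ((h j' : ℕ) = w j' + 1 ∧ o₁.length < w j')) := by
        have := hb j'
        simp only [hwdef]
        split_ifs <;> omega
      obtain ⟨hph, hii⟩ := hsame (w j') (h j' : ℕ) (hwlt j') (h j').2 hdis
      constructor
      · rw [← hph]
        exact hp.1
      · rw [← hii]
        exact hp.2
    · intro j
      have hj2 : (j : ℕ) < o₁.length + 1 + o₂.length := by have := j.2; omega
      simp only [List.get_eq_getElem]
      rcases Nat.lt_trichotomy (j : ℕ) o₁.length with hc | hc | hc
      · have hio : (j : ℕ) < (o₁ ++ [B, Cg] ++ o₂).length := by rw [hLo']; omega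
        have h1 := hmult ⟨(j : ℕ), hio⟩
        rw [List.get_eq_getElem, getElem3_left hc] at h1
        rw [getElem3_left hc]
        have hfeq : (Finset.univ.filter (fun j' => (⟨w j', hwlt j'⟩ : Fin (o₁ ++ [A] ++ o₂).length) = j))
            = Finset.univ.filter (fun j' => h j' = ⟨(j : ℕ), hio⟩) := by
          ext z
          simp only [Finset.mem_filter, Finset.mem_univ, true_and, Fin.ext_iff]
          have := hb z
          simp only [hwdef]
          split_ifs <;> omega
        rw [hfeq]
        exact h1
      · have hgA : (o₁ ++ [A] ++ o₂)[(j : ℕ)]'(j.2) = A :=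
          getElem3_mid (k := 0) (by omega) (by simp)
        rw [hgA]
        have hio1 : o₁.length < (o₁ ++ [B, Cg] ++ o₂).length := by rw [hLo']; omega
        have hio2 : o₁.length + 1 < (o₁ ++ [B, Cg] ++ o₂).length := by rw [hLo']; omega
        have h1 := hmult ⟨o₁.length, hio1⟩
        rw [List.get_eq_getElem, getElem3_mid (k := 0) (by simp) (by simp)] at h1
        have h1' : (Finset.univ.filter (fun j' => h j' = ⟨o₁.length, hio1⟩)).card = e := h1
        have hfeq : (Finset.univ.filter (fun j' => (⟨w j', hwlt j'⟩ : Fin (o₁ ++ [A] ++ o₂).length) = j))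
            = Finset.univ.filter (fun j' => h j' = ⟨o₁.length, hio1⟩) ∪
              Finset.univ.filter (fun j' => h j' = ⟨o₁.length + 1, hio2⟩) := by
          ext z
          simp only [Finset.mem_union, Finset.mem_filter, Finset.mem_univ, true_and, Fin.ext_iff]
          have := hb z
          simp only [hwdef]
          split_ifs <;> omega
        have hdisj : Disjoint (Finset.univ.filter (fun j' => h j' = ⟨o₁.length, hio1⟩))
            (Finset.univ.filter (fun j' => h j' = ⟨o₁.length + 1, hio2⟩)) := by
          simp only [Finset.disjoint_left, Finset.mem_filter, Finset.mem_univ, true_and]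
          intro x hx1 hx2
          rw [hx1] at hx2
          rw [Fin.ext_iff] at hx2
          simp at hx2
        rw [hfeq, Finset.card_union_of_disjoint hdisj]
        show e ≤ _
        omega
      · have hio : (j : ℕ) + 1 < (o₁ ++ [B, Cg] ++ o₂).length := by rw [hLo']; omega
        have h1 := hmult ⟨(j : ℕ) + 1, hio⟩
        rw [List.get_eq_getElem,
          getElem3_right (k := (j : ℕ) - (o₁.length + 1)) (by simp; omega) (by omega)] at h1
        rw [getElem3_right (k := (j : ℕ) - (o₁.length + 1)) (by simp; omega) (by omega)]
        have hfeq : (Finset.univ.filter (fun j' => (⟨w j', hwlt j'⟩ : Fin (o₁ ++ [A] ++ o₂).length) = j))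
            = Finset.univ.filter (fun j' => h j' = ⟨(j : ℕ) + 1, hio⟩) := by
          ext z
          simp only [Finset.mem_filter, Finset.mem_univ, true_and, Fin.ext_iff]
          have := hb z
          simp only [hwdef]
          split_ifs <;> omega
        rw [hfeq]
        exact h1
end
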